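/- Suppose the finite group G acts on the finite set Ω and (G, Ω) satisfies Hypothesis (3fix), and let ω ∈ Ω. Then one of the following holds: (1) |G_ω| is even; (2) |G_ω| is odd and there exist three distinct points of Ω, one of which is ω, whose pointwise stabilizer H in G is nontrivial and is a Frobenius complement in G_ω, i.e. H is a proper subgroup of G_ω with H ∩ xHx⁻¹ = 1 for all x ∈ G_ω \ H; (3) |G_ω| is odd and G_ω has exactly three common fixed points on Ω. -/

import Mathlib

/-!
Choose `b, c` so that the pointwise stabilizer `H` of `ω, b, c` is nontrivial (conjugate the
nontrivial three-point stabilizer given by (3fix)). A nontrivial element of `H` fixes exactly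
`ω, b, c`. If `G_ω = H`, these are the common fixed points of `G_ω`. Otherwise, for
`x ∈ G_ω \ H`, a nontrivial `y ∈ H ∩ xHx⁻¹` also fixes `x • b` and `x • c`, so `x` permutes
`{b, c}` and `x² ∈ H`; as `x` has odd order, `x` is a power of `x²`, hence `x ∈ H`.
-/

/-- Hypothesis (3fix): the action of `G` on `Ω` is faithful and transitive, every element
of `G` fixing at least four distinct points of `Ω` is the identity, and some nontrivial
element of `G` fixes at least three distinct points of `Ω`. -/
def Hyp3fix (G : Type*) [Group G] (Ω : Type*) [MulAction G Ω] : Prop :=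
  MulAction.IsPretransitive G Ω ∧
  (∀ g : G, (∀ ω : Ω, g • ω = ω) → g = 1) ∧
  (∀ g : G, ∀ a b c d : Ω, a ≠ b → a ≠ c → a ≠ d → b ≠ c → b ≠ d → c ≠ d →
      g • a = a → g • b = b → g • c = c → g • d = d → g = 1) ∧
  (∃ g : G, g ≠ 1 ∧ ∃ a b c : Ω, a ≠ b ∧ a ≠ c ∧ b ≠ c ∧
      g • a = a ∧ g • b = b ∧ g • c = c)

open MulAction

theorem Subgroup.mem_of_sq_mem_of_odd_natCard {G : Type*} [Group G] {H K : Subgroup G}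
    (hK : Odd (Nat.card K)) {x : G} (hxK : x ∈ K) (hx : x ^ 2 ∈ H) : x ∈ H := by
  have hodd : Odd (orderOf x) := hK.of_dvd_nat (K.orderOf_dvd_natCard hxK)
  obtain ⟨m, hm⟩ := exists_pow_eq_self_of_coprime (Nat.coprime_two_left.2 hodd)
  exact hm ▸ pow_mem hx m

def FourPointStabilizersTrivial (G α : Type*) [Group G] [MulAction G α] : Prop :=
  ∀ g : G, ∀ a b c d : α, a ≠ b → a ≠ c → a ≠ d → b ≠ c → b ≠ d → c ≠ d →
    g • a = a → g • b = b → g • c = c → g • d = d → g = 1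

section ThreePointStabilizer

variable {G α : Type*} [Group G] [MulAction G α] {a b c : α}

theorem mem_stabilizer_inf_stabilizer_inf_stabilizer {g : G} :
    g ∈ stabilizer G a ⊓ stabilizer G b ⊓ stabilizer G c ↔
      g • a = a ∧ g • b = b ∧ g • c = c := by
  simp only [Subgroup.mem_inf, mem_stabilizer_iff, and_assoc]

theorem exists_stabilizer_inf_stabilizer_inf_stabilizer_ne_bot [IsPretransitive G α]
    (h : ∃ g : G, g ≠ 1 ∧ ∃ a b c : α, a ≠ b ∧ a ≠ c ∧ b ≠ c ∧
      g • a = a ∧ g • b = b ∧ g • c = c) (ω : α) :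
    ∃ b c : α, ω ≠ b ∧ ω ≠ c ∧ b ≠ c ∧
      stabilizer G ω ⊓ stabilizer G b ⊓ stabilizer G c ≠ ⊥ := by
  obtain ⟨g, hg, a, b, c, hab, hac, hbc, hga, hgb, hgc⟩ := h
  obtain ⟨t, rfl⟩ := exists_smul_eq G a ω
  have hinj : Function.Injective (t • · : α → α) := MulAction.injective t
  refine ⟨t • b, t • c, hinj.ne hab, hinj.ne hac, hinj.ne hbc,
    (Subgroup.ne_bot_iff_exists_ne_one).2 ⟨⟨t * g * t⁻¹, ?_⟩, ?_⟩⟩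
  · simp [mul_smul, hga, hgb, hgc]
  · simpa [Subgroup.mk_eq_one, mul_inv_eq_one] using hg

theorem eq_or_eq_or_eq_of_smul_eq_self (h4 : FourPointStabilizersTrivial G α)
    (hab : a ≠ b) (hac : a ≠ c) (hbc : b ≠ c) {g : G}
    (hg : g ∈ stabilizer G a ⊓ stabilizer G b ⊓ stabilizer G c) (hg1 : g ≠ 1) {p : α}
    (hp : g • p = p) : p = a ∨ p = b ∨ p = c := by
  obtain ⟨ha, hb, hc⟩ := mem_stabilizer_inf_stabilizer_inf_stabilizer.1 hg
  by_contra! hpabc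
  exact hg1 (h4 g a b c p hab hac (Ne.symm hpabc.1) hbc (Ne.symm hpabc.2.1)
    (Ne.symm hpabc.2.2) ha hb hc hp)

theorem setOf_forall_smul_eq_self_eq_of_stabilizer_le (h4 : FourPointStabilizersTrivial G α)
    (hab : a ≠ b) (hac : a ≠ c) (hbc : b ≠ c)
    (hne : stabilizer G a ⊓ stabilizer G b ⊓ stabilizer G c ≠ ⊥)
    (hle : stabilizer G a ≤ stabilizer G a ⊓ stabilizer G b ⊓ stabilizer G c) :
    {p : α | ∀ x ∈ stabilizer G a, x • p = p} = {a, b, c} := by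
  obtain ⟨⟨g, hg⟩, hg1⟩ := (Subgroup.ne_bot_iff_exists_ne_one).1 hne
  ext p
  constructor
  · intro hp
    exact eq_or_eq_or_eq_of_smul_eq_self h4 hab hac hbc hg (by simpa using hg1)
      (hp g (mem_stabilizer_inf_stabilizer_inf_stabilizer.1 hg).1)
  · rintro hp x hx
    obtain ⟨ha, hb, hc⟩ := mem_stabilizer_inf_stabilizer_inf_stabilizer.1 (hle hx)
    rcases hp with rfl | rfl | rfl <;> assumption

theorem sq_mem_stabilizer_inf_stabilizer_inf_stabilizer (hbc : b ≠ c) {x : G}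
    (ha : x • a = a) (hb : x • b = b ∨ x • b = c) (hc : x • c = b ∨ x • c = c) :
    x ^ 2 ∈ stabilizer G a ⊓ stabilizer G b ⊓ stabilizer G c := by
  have hxbc : x • b ≠ x • c := (MulAction.injective x).ne hbc
  rw [mem_stabilizer_inf_stabilizer_inf_stabilizer]
  rcases hb with hb | hb <;> rcases hc with hc | hc <;>
    simp_all [sq, mul_smul]

theorem stabilizer_inf_stabilizer_inf_stabilizer_inf_map_conj_eq_bot
    (h4 : FourPointStabilizersTrivial G α) (hab : a ≠ b) (hac : a ≠ c) (hbc : b ≠ c)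
    (hodd : Odd (Nat.card (stabilizer G a))) {x : G} (hx : x ∈ stabilizer G a)
    (hxH : x ∉ stabilizer G a ⊓ stabilizer G b ⊓ stabilizer G c) :
    (stabilizer G a ⊓ stabilizer G b ⊓ stabilizer G c) ⊓
      (stabilizer G a ⊓ stabilizer G b ⊓ stabilizer G c).map (MulAut.conj x).toMonoidHom =
      ⊥ := by
  refine (Subgroup.eq_bot_iff_forall _).2 fun y hy => by_contra fun hy1 => hxH ?_
  obtain ⟨hyH, z, hzH, rfl⟩ := Subgroup.mem_inf.1 hy
  obtain ⟨-, hzb, hzc⟩ := mem_stabilizer_inf_stabilizer_inf_stabilizer.1 hzH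
  have hx : x • a = a := hx
  have hpair : ∀ q, q ≠ a → z • q = q → x • q = b ∨ x • q = c := by
    intro q hqa hzq
    have hfix : (MulAut.conj x).toMonoidHom z • x • q = x • q := by
      simp [mul_smul, hzq]
    refine (eq_or_eq_or_eq_of_smul_eq_self h4 hab hac hbc hyH hy1 hfix).resolve_left ?_
    rw [← hx]
    exact (MulAction.injective x).ne hqa
  refine Subgroup.mem_of_sq_mem_of_odd_natCard hodd hx
    (sq_mem_stabilizer_inf_stabilizer_inf_stabilizer hbc hx ?_ ?_)
  · exact hpair b hab.symm hzb
  · exact hpair c hac.symm hzc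

end ThreePointStabilizer

theorem hyp3fix_cases_general (G : Type*) [Group G]
    (Ω : Type*) [MulAction G Ω] (h : Hyp3fix G Ω) (ω : Ω) :
    Even (Nat.card (MulAction.stabilizer G ω)) ∨
    (Odd (Nat.card (MulAction.stabilizer G ω)) ∧
      ∃ b c : Ω, ω ≠ b ∧ ω ≠ c ∧ b ≠ c ∧
        ∃ H : Subgroup G,
          H = MulAction.stabilizer G ω ⊓ MulAction.stabilizer G b ⊓
                MulAction.stabilizer G c ∧
          H ≠ ⊥ ∧ H < MulAction.stabilizer G ω ∧
          ∀ x ∈ MulAction.stabilizer G ω, x ∉ H →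
            H ⊓ H.map (MulAut.conj x).toMonoidHom = ⊥) ∨
    (Odd (Nat.card (MulAction.stabilizer G ω)) ∧
      Nat.card {p : Ω | ∀ x ∈ MulAction.stabilizer G ω, x • p = p} = 3) := by
  obtain ⟨htrans, -, h4, hthree⟩ := h
  obtain ⟨b, c, hωb, hωc, hbc, hne⟩ :=
    exists_stabilizer_inf_stabilizer_inf_stabilizer_ne_bot hthree ω
  rcases Nat.even_or_odd (Nat.card (stabilizer G ω)) with heven | hodd
  · exact Or.inl heven
  by_cases hle : stabilizer G ω ≤ stabilizer G ω ⊓ stabilizer G b ⊓ stabilizer G c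
  · refine Or.inr (Or.inr ⟨hodd, ?_⟩)
    rw [setOf_forall_smul_eq_self_eq_of_stabilizer_le h4 hωb hωc hbc hne hle,
      Nat.card_coe_set_eq]
    exact Set.ncard_eq_three.2 ⟨ω, b, c, hωb, hωc, hbc, rfl⟩
  · exact Or.inr (Or.inl ⟨hodd, b, c, hωb, hωc, hbc, _, rfl, hne,
      (inf_le_left.trans inf_le_left).lt_of_not_ge hle, fun x hx hxH =>
        stabilizer_inf_stabilizer_inf_stabilizer_inf_map_conj_eq_bot h4 hωb hωc hbc hodd hx hxH⟩)

/-- Suppose `(G, Ω)` satisfies Hypothesis (3fix) and `ω ∈ Ω`. Then either `|G_ω|` is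
even; or `|G_ω|` is odd and the pointwise stabilizer `H` of some three distinct points
(one of which is `ω`) is nontrivial and is a Frobenius complement in `G_ω`; or
`|G_ω|` is odd and `G_ω` has exactly three common fixed points on `Ω`. -/
theorem hyp3fix_cases (G : Type*) [Group G] [Finite G]
    (Ω : Type*) [Finite Ω] [MulAction G Ω] (h : Hyp3fix G Ω) (ω : Ω) :
    Even (Nat.card (MulAction.stabilizer G ω)) ∨
    (Odd (Nat.card (MulAction.stabilizer G ω)) ∧
      ∃ b c : Ω, ω ≠ b ∧ ω ≠ c ∧ b ≠ c ∧
        ∃ H : Subgroup G,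
          H = MulAction.stabilizer G ω ⊓ MulAction.stabilizer G b ⊓
                MulAction.stabilizer G c ∧
          H ≠ ⊥ ∧ H < MulAction.stabilizer G ω ∧
          ∀ x ∈ MulAction.stabilizer G ω, x ∉ H →
            H ⊓ H.map (MulAut.conj x).toMonoidHom = ⊥) ∨
    (Odd (Nat.card (MulAction.stabilizer G ω)) ∧
      Nat.card {p : Ω | ∀ x ∈ MulAction.stabilizer G ω, x • p = p} = 3) :=
  hyp3fix_cases_general G Ω h ω
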